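/- Let f : 𝔹^N → 𝔹^N. The single-index map G_f is chaotic in the sense of Devaney on (𝒳₁, d₁) if and only if the asynchronous iteration graph Γ(f) is strongly connected. -/
import Mathlib


open scoped BigOperators

/-- Hamming distance `d_e` on `𝔹^N`: the number of coordinates where `E` and `F` differ. -/
noncomputable def deH (N : ℕ) (E F : Fin N → Bool) : ℝ :=
  ((Finset.univ.filter fun i => E i ≠ F i).card : ℝ)

/-- The distance `d_s` on single-index strategies `⟦1,N⟧^ℕ`:
`d_s(S,Š) = (9/N) Σ_{k=1}^{∞} |S^k − Š^k| / 10^k` (sequences are indexed from 0 here,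
so the `k`-th term of the sequence gets weight `10^{-(k+1)}`). -/
noncomputable def ds1 (N : ℕ) (S T : ℕ → Fin N) : ℝ :=
  (9 / (N : ℝ)) * ∑' k : ℕ, |((S k : ℕ) : ℝ) - ((T k : ℕ) : ℝ)| / 10 ^ (k + 1)

/-- The distance `d₁` on the single-index phase space `𝒳₁ = ⟦1,N⟧^ℕ × 𝔹^N`. -/
noncomputable def dX1 (N : ℕ) (X Y : (ℕ → Fin N) × (Fin N → Bool)) : ℝ :=
  deH N X.2 Y.2 + ds1 N X.1 Y.1

/-- `F_f(k,E)_j = f(E)_j` if `j = k`, and `E_j` otherwise. -/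
def Ff1 (N : ℕ) (f : (Fin N → Bool) → (Fin N → Bool)) (k : Fin N)
    (E : Fin N → Bool) : Fin N → Bool :=
  fun j => if j = k then f E j else E j

/-- The single-index map `G_f(S,E) = (σ(S), F_f(S^0,E))`, where `σ` is the shift. -/
def Gf1 (N : ℕ) (f : (Fin N → Bool) → (Fin N → Bool)) :
    (ℕ → Fin N) × (Fin N → Bool) → (ℕ → Fin N) × (Fin N → Bool) :=
  fun X => (fun n => X.1 (n + 1), Ff1 N f (X.1 0) X.2)

/-- One arc of the asynchronous iteration graph `Γ(f)`: there is an arc from `x` to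
`F_f(i,x)` for each `i ∈ ⟦1,N⟧`. -/
def gammaArc (N : ℕ) (f : (Fin N → Bool) → (Fin N → Bool))
    (x y : Fin N → Bool) : Prop :=
  ∃ i : Fin N, y = Ff1 N f i x

namespace ChaosAux

variable {N : ℕ} (f : (Fin N → Bool) → (Fin N → Bool))

/-- Iterated application of `Ff1` along a strategy. -/
def chain (S : ℕ → Fin N) (E : Fin N → Bool) : ℕ → (Fin N → Bool)
  | 0 => E
  | k + 1 => Ff1 N f (S k) (chain S E k)

theorem iterate_Gf1 (S : ℕ → Fin N) (E : Fin N → Bool) (k : ℕ) :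
    (Gf1 N f)^[k] (S, E) = (fun n => S (n + k), chain f S E k) := by
  induction k with
  | zero => simp [chain]
  | succ k ih =>
    rw [Function.iterate_succ_apply', ih]
    refine Prod.ext ?_ ?_
    · funext n; show S (n + 1 + k) = S (n + (k + 1)); congr 1; omega
    · show Ff1 N f (S (0 + k)) (chain f S E k) = chain f S E (k + 1)
      simp [chain]

theorem chain_congr {S T : ℕ → Fin N} (E : Fin N → Bool) (k : ℕ)
    (h : ∀ i < k, S i = T i) : chain f S E k = chain f T E k := by
  induction k with
  | zero => rfl
  | succ k ih =>
    simp only [chain, ih (fun i hi => h i (by omega)), h k (by omega)]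

theorem chain_add (S : ℕ → Fin N) (E : Fin N → Bool) (a b : ℕ) :
    chain f S E (a + b) = chain f (fun n => S (n + a)) (chain f S E a) b := by
  induction b with
  | zero => rfl
  | succ b ih =>
    show chain f S E ((a + b) + 1) = _
    simp only [chain, ih]
    rw [Nat.add_comm a b]

def appL (L : List (Fin N)) (E : Fin N → Bool) : Fin N → Bool :=
  L.foldl (fun E i => Ff1 N f i E) E

theorem chain_appL (L : List (Fin N)) (E : Fin N → Bool) (W : ℕ → Fin N)
    (h : ∀ i (hi : i < L.length), W i = L.get ⟨i, hi⟩) :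
    chain f W E L.length = appL f L E := by
  induction L generalizing E W with
  | nil => rfl
  | cons a L ih =>
    have h0 : W 0 = a := h 0 (by simp)
    have h1 : chain f W E (a :: L).length
        = chain f (fun n => W (n + 1)) (chain f W E 1) L.length := by
      rw [show (a :: L).length = 1 + L.length by rw [List.length_cons]; omega]
      exact chain_add f W E 1 L.length
    rw [h1]
    have h2 : chain f W E 1 = Ff1 N f a E := by
      simp [chain, h0]
    rw [h2, ih (Ff1 N f a E) (fun n => W (n + 1)) ?_]
    · rfl
    · intro i hi
      have := h (i + 1) (by simp; omega)
      simpa using this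

theorem reach_to_list {x y : Fin N → Bool}
    (h : Relation.ReflTransGen (gammaArc N f) x y) :
    ∃ L : List (Fin N), appL f L x = y := by
  induction h with
  | refl => exact ⟨[], rfl⟩
  | tail _ hbc ih =>
    obtain ⟨L, hL⟩ := ih
    obtain ⟨i, hi⟩ := hbc
    refine ⟨L ++ [i], ?_⟩
    simp only [appL, List.foldl_append, List.foldl_cons, List.foldl_nil]
    rw [show L.foldl (fun E i => Ff1 N f i E) x = appL f L x from rfl, hL, ← hi]

theorem reach_chain (S : ℕ → Fin N) (E : Fin N → Bool) (k : ℕ) :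
    Relation.ReflTransGen (gammaArc N f) E (chain f S E k) := by
  induction k with
  | zero => exact .refl
  | succ k ih => exact ih.tail ⟨S k, rfl⟩

-- metric lemmas

theorem term_le (S T : ℕ → Fin N) (k : ℕ) :
    |((S k : ℕ) : ℝ) - ((T k : ℕ) : ℝ)| ≤ (N : ℝ) := by
  have h1 : ((S k : ℕ) : ℝ) ≤ N := by
    have := (S k).2
    exact_mod_cast Nat.le_of_lt this
  have h2 : ((T k : ℕ) : ℝ) ≤ N := by
    have := (T k).2
    exact_mod_cast Nat.le_of_lt this
  have h3 : (0 : ℝ) ≤ ((S k : ℕ) : ℝ) := Nat.cast_nonneg _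
  have h4 : (0 : ℝ) ≤ ((T k : ℕ) : ℝ) := Nat.cast_nonneg _
  rw [abs_sub_le_iff]; constructor <;> linarith

theorem one_div_ten_pow (m : ℕ) : ((1:ℝ)/10) ^ m = (10 ^ m)⁻¹ := by
  rw [one_div, inv_pow]

theorem geo_shift_summable (c : ℝ) :
    Summable (fun k : ℕ => c * (1/10 : ℝ) ^ (k + 1)) := by
  have h : (fun k : ℕ => c * (1/10 : ℝ) ^ (k + 1))
      = fun k : ℕ => (c * (1/10)) * (1/10 : ℝ) ^ k := by
    funext k; rw [pow_succ]; ring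
  rw [h]
  exact (summable_geometric_of_lt_one (by norm_num) (by norm_num)).mul_left _

theorem ds1_summable (S T : ℕ → Fin N) :
    Summable (fun k : ℕ => |((S k : ℕ) : ℝ) - ((T k : ℕ) : ℝ)| / 10 ^ (k + 1)) := by
  apply Summable.of_nonneg_of_le (f := fun k : ℕ => (N : ℝ) * (1/10 : ℝ) ^ (k + 1))
    (fun k => by positivity)
  · intro k
    have h := term_le S T k
    have heq : (N : ℝ) * (1/10 : ℝ) ^ (k + 1) = (N : ℝ) / 10 ^ (k + 1) := by
      rw [one_div_ten_pow, div_eq_mul_inv]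
    rw [heq]
    gcongr
  · exact geo_shift_summable _

theorem ds1_nonneg (S T : ℕ → Fin N) : 0 ≤ ds1 N S T := by
  unfold ds1
  apply mul_nonneg (by positivity)
  exact tsum_nonneg fun k => by positivity

set_option maxHeartbeats 2000000 in
theorem ds1_le_of_agree (hN : 0 < N) (S T : ℕ → Fin N) (n : ℕ)
    (h : ∀ k < n, S k = T k) : ds1 N S T ≤ (1/10 : ℝ) ^ n := by
  unfold ds1
  have hsum := ds1_summable S T
  have hsplit := Summable.sum_add_tsum_nat_add (f := fun k : ℕ =>
    |((S k : ℕ) : ℝ) - ((T k : ℕ) : ℝ)| / 10 ^ (k + 1)) n hsum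
  have hzero : ∑ i ∈ Finset.range n,
      |((S i : ℕ) : ℝ) - ((T i : ℕ) : ℝ)| / 10 ^ (i + 1) = 0 := by
    apply Finset.sum_eq_zero
    intro i hi
    rw [h i (Finset.mem_range.mp hi)]
    simp
  rw [← hsplit, hzero, zero_add]
  have htail : ∑' k : ℕ, |((S (k + n) : ℕ) : ℝ) - ((T (k + n) : ℕ) : ℝ)| / 10 ^ (k + n + 1)
      ≤ ∑' k : ℕ, ((N : ℝ) * (1/10 : ℝ) ^ (n + 1)) * (1/10 : ℝ) ^ k := by
    apply Summable.tsum_le_tsum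
    · intro k
      have h1 := term_le S T (k + n)
      calc |((S (k+n) : ℕ) : ℝ) - ((T (k+n) : ℕ) : ℝ)| / 10 ^ (k + n + 1)
          ≤ (N : ℝ) / 10 ^ (k + n + 1) := by gcongr
          _ = ((N : ℝ) * (1/10 : ℝ) ^ (n + 1)) * (1/10 : ℝ) ^ k := by
            rw [show k + n + 1 = (n + 1) + k by omega, one_div_ten_pow, one_div_ten_pow,
              mul_assoc, ← mul_inv, ← pow_add, div_eq_mul_inv]
    · exact (summable_nat_add_iff n).2 hsum
    · exact (summable_geometric_of_lt_one (by norm_num) (by norm_num)).mul_left _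
  have hgeo : ∑' k : ℕ, ((N : ℝ) * (1/10 : ℝ) ^ (n + 1)) * (1/10 : ℝ) ^ k
      = (N : ℝ) * (1/10 : ℝ) ^ (n + 1) * (1 - 1/10)⁻¹ := by
    rw [tsum_mul_left, tsum_geometric_of_lt_one (by norm_num) (by norm_num)]
  have hNpos : (0:ℝ) < N := by exact_mod_cast hN
  have hN' : (N : ℝ) ≠ 0 := ne_of_gt hNpos
  have hfinal : (9 / (N : ℝ)) * ((N : ℝ) * (1/10 : ℝ) ^ (n + 1) * (1 - 1/10)⁻¹)
      = (1/10 : ℝ) ^ n := by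
    rw [pow_succ, show ((1 : ℝ) - 1/10)⁻¹ = 10/9 by norm_num]
    field_simp
  calc (9 / (N : ℝ)) * ∑' k : ℕ, |((S (k + n) : ℕ) : ℝ) - ((T (k + n) : ℕ) : ℝ)| / 10 ^ (k + n + 1)
      ≤ (9 / (N : ℝ)) * ((N : ℝ) * (1/10 : ℝ) ^ (n + 1) * (1 - 1/10)⁻¹) := by
        apply mul_le_mul_of_nonneg_left _ (by positivity)
        rw [← hgeo]; exact htail
    _ = (1/10 : ℝ) ^ n := hfinal

theorem deH_self (E : Fin N → Bool) : deH N E E = 0 := by simp [deH]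

theorem eq_of_deH_lt_one {E F : Fin N → Bool} (h : deH N E F < 1) : E = F := by
  have hc : (Finset.univ.filter fun i => E i ≠ F i).card = 0 := by
    have : ((Finset.univ.filter fun i => E i ≠ F i).card : ℝ) < 1 := h
    exact_mod_cast Nat.lt_one_iff.mp (by exact_mod_cast this)
  rw [Finset.card_eq_zero] at hc
  funext i
  by_contra hi
  have : i ∈ Finset.univ.filter fun i => E i ≠ F i := by
    simp [hi]
  rw [hc] at this
  exact absurd this (Finset.notMem_empty i)

end ChaosAux

set_option maxHeartbeats 1000000 in
open ChaosAux in
/-- The single-index map `G_f` is chaotic in the sense of Devaney on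
`(𝒳₁, d₁)` (topologically transitive and with dense periodic points, openness and balls
for the metric `d₁`) if and only if the asynchronous iteration graph `Γ(f)` is strongly
connected (there is a directed path between any ordered pair of vertices). -/
theorem Gf1_chaotic_iff_strongly_connected (N : ℕ) (hN : 0 < N)
    (f : (Fin N → Bool) → (Fin N → Bool)) :
    (((∀ U V : Set ((ℕ → Fin N) × (Fin N → Bool)),
        (∀ x ∈ U, ∃ ε : ℝ, 0 < ε ∧ ∀ z, dX1 N x z < ε → z ∈ U) →
        (∀ x ∈ V, ∃ ε : ℝ, 0 < ε ∧ ∀ z, dX1 N x z < ε → z ∈ V) →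
        U.Nonempty → V.Nonempty →
        ∃ k : ℕ, 0 < k ∧ ((Gf1 N f)^[k] '' U ∩ V).Nonempty) ∧
      (∀ X : (ℕ → Fin N) × (Fin N → Bool), ∀ ε : ℝ, 0 < ε →
        ∃ Y : (ℕ → Fin N) × (Fin N → Bool),
          dX1 N X Y < ε ∧ ∃ n : ℕ, 0 < n ∧ (Gf1 N f)^[n] Y = Y))
      ↔ ∀ x y : Fin N → Bool, Relation.ReflTransGen (gammaArc N f) x y) := by
  constructor
  · -- chaotic → strongly connected
    rintro ⟨htrans, -⟩ x y
    set U : Set ((ℕ → Fin N) × (Fin N → Bool)) := {z | z.2 = x} with hUdef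
    set V : Set ((ℕ → Fin N) × (Fin N → Bool)) := {z | z.2 = y} with hVdef
    have hopen : ∀ (c : Fin N → Bool) (w : (ℕ → Fin N) × (Fin N → Bool)),
        w.2 = c → ∀ z, dX1 N w z < 1 → z.2 = c := by
      intro c w hw z hz
      have h1 : deH N w.2 z.2 < 1 := by
        have h2 := ds1_nonneg w.1 z.1
        unfold dX1 at hz
        linarith
      rw [← eq_of_deH_lt_one h1, hw]
    have hUo : ∀ w ∈ U, ∃ ε : ℝ, 0 < ε ∧ ∀ z, dX1 N w z < ε → z ∈ U :=
      fun w hw => ⟨1, one_pos, fun z hz => hopen x w hw z hz⟩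
    have hVo : ∀ w ∈ V, ∃ ε : ℝ, 0 < ε ∧ ∀ z, dX1 N w z < ε → z ∈ V :=
      fun w hw => ⟨1, one_pos, fun z hz => hopen y w hw z hz⟩
    obtain ⟨k, -, w, ⟨u, huU, huw⟩, hwV⟩ :=
      htrans U V hUo hVo ⟨((fun _ => ⟨0, hN⟩), x), rfl⟩ ⟨((fun _ => ⟨0, hN⟩), y), rfl⟩
    have hit : (Gf1 N f)^[k] (u.1, u.2) = (fun n => u.1 (n + k), chain f u.1 u.2 k) :=
      iterate_Gf1 f u.1 u.2 k
    rw [Prod.mk.eta] at hit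
    have hy : y = chain f u.1 u.2 k := by
      have h2 : w.2 = y := hwV
      have h3 : w.2 = chain f u.1 u.2 k := by rw [← huw, hit]
      exact h2.symm.trans h3
    have hx : u.2 = x := huU
    rw [hy, ← hx]
    exact reach_chain f u.1 u.2 k
  · -- strongly connected → chaotic
    intro hsc
    constructor
    · -- transitivity
      rintro U V hU - ⟨u, huU⟩ ⟨v, hvV⟩
      obtain ⟨ε, hε, hball⟩ := hU u huU
      obtain ⟨n0, hn0⟩ := exists_pow_lt_of_lt_one hε (show (1/10 : ℝ) < 1 by norm_num)
      set n := max n0 1 with hn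
      have hdist : (1/10 : ℝ) ^ n < ε :=
        lt_of_le_of_lt (pow_le_pow_of_le_one (by norm_num) (by norm_num)
          (le_max_left n0 1)) hn0
      obtain ⟨L, hL⟩ := reach_to_list f (hsc (chain f u.1 u.2 n) v.2)
      set m := L.length with hm
      set S' : ℕ → Fin N := fun k =>
        if h1 : k < n then u.1 k
        else if h2 : k - n < m then L.get ⟨k - n, h2⟩
        else v.1 (k - n - m) with hS'
      have hagree : ∀ k < n, u.1 k = S' k := by
        intro k hk; simp only [hS', dif_pos hk]
      have hmemU : (S', u.2) ∈ U := by
        apply hball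
        have : dX1 N u (S', u.2) = ds1 N u.1 S' := by
          unfold dX1; rw [deH_self]; ring
        rw [this]
        exact lt_of_le_of_lt (ds1_le_of_agree hN u.1 S' n hagree) hdist
      refine ⟨n + m, by omega, (Gf1 N f)^[n + m] (S', u.2), ⟨(S', u.2), hmemU, rfl⟩, ?_⟩
      have hkey : (Gf1 N f)^[n + m] (S', u.2) = v := by
        rw [iterate_Gf1]
        refine Prod.ext ?_ ?_
        · funext nn
          show S' (nn + (n + m)) = v.1 nn
          simp only [hS']
          rw [dif_neg (by omega), dif_neg (by omega),
            show nn + (n + m) - n - m = nn by omega]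
        · show chain f S' u.2 (n + m) = v.2
          have h1 : chain f S' u.2 n = chain f u.1 u.2 n :=
            (chain_congr f u.2 n hagree).symm
          have hW : ∀ i (hi : i < L.length),
              (fun nn => S' (nn + n)) i = L.get ⟨i, hi⟩ := by
            intro i hi
            show S' (i + n) = L.get ⟨i, hi⟩
            simp only [hS']
            rw [dif_neg (by omega), dif_pos (show i + n - n < m by omega)]
            congr 1
            exact Fin.ext (Nat.add_sub_cancel i n)
          rw [chain_add, h1, hm,
            chain_appL f L (chain f u.1 u.2 n) (fun nn => S' (nn + n)) hW, hL]
      rw [hkey]; exact hvV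
    · -- dense periodic points
      intro X ε hε
      obtain ⟨n0, hn0⟩ := exists_pow_lt_of_lt_one hε (show (1/10 : ℝ) < 1 by norm_num)
      set n := max n0 1 with hn
      have hdist : (1/10 : ℝ) ^ n < ε :=
        lt_of_le_of_lt (pow_le_pow_of_le_one (by norm_num) (by norm_num)
          (le_max_left n0 1)) hn0
      obtain ⟨L, hL⟩ := reach_to_list f (hsc (chain f X.1 X.2 n) X.2)
      set m := L.length with hm
      have hp : 0 < n + m := by omega
      set S' : ℕ → Fin N := fun k =>
        if h1 : k % (n + m) < n then X.1 (k % (n + m))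
        else L.get ⟨k % (n + m) - n, by
          have := Nat.mod_lt k hp
          omega⟩ with hS'
      have hagree : ∀ k < n, X.1 k = S' k := by
        intro k hk
        have hmod : k % (n + m) = k := Nat.mod_eq_of_lt (by omega)
        simp only [hS', hmod, dif_pos hk]
      refine ⟨(S', X.2), ?_, n + m, hp, ?_⟩
      · have : dX1 N X (S', X.2) = ds1 N X.1 S' := by
          unfold dX1; rw [deH_self]; ring
        rw [this]
        exact lt_of_le_of_lt (ds1_le_of_agree hN X.1 S' n hagree) hdist
      · rw [iterate_Gf1]
        refine Prod.ext ?_ ?_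
        · funext nn
          show S' (nn + (n + m)) = S' nn
          have hmod : (nn + (n + m)) % (n + m) = nn % (n + m) :=
            Nat.add_mod_right nn (n + m)
          simp only [hS', hmod]
        · show chain f S' X.2 (n + m) = X.2
          have h1 : chain f S' X.2 n = chain f X.1 X.2 n :=
            (chain_congr f X.2 n hagree).symm
          have hW : ∀ i (hi : i < L.length),
              (fun nn => S' (nn + n)) i = L.get ⟨i, hi⟩ := by
            intro i hi
            show S' (i + n) = L.get ⟨i, hi⟩
            have hmod : (i + n) % (n + m) = i + n := Nat.mod_eq_of_lt (by omega)
            simp only [hS', hmod]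
            rw [dif_neg (by omega)]
            congr 1
            exact Fin.ext (Nat.add_sub_cancel i n)
          rw [chain_add, h1, hm,
            chain_appL f L (chain f X.1 X.2 n) (fun nn => S' (nn + n)) hW, hL]
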